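/- For any fixed k ≥ 3, the following identity of formal power series over ℚ holds: (1 − x)(1 − x^k)(1 − 2x + x^k) · ∑_{n ≥ 0} |𝒱^(k)(n)| x^n = x^{2k} (x − x^k)^2, where |𝒱^(k)(n)| denotes the cardinality of 𝒱^(k)(n) (which is 0 for n < 2k+2). -/

import Mathlib

/-!
Binary strings are modeled as `List Bool`, with `true` = 1 and `false` = 0.
-/

/-- A string `v` is bifix-free if no nonempty proper prefix of `v` equals a
(proper) suffix of `v`. -/
def BifixFree (v : List Bool) : Prop :=
  ∀ p : List Bool, p ≠ [] → p ≠ v → p <+: v → ¬ p <:+ v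

/-- The set `V_n^(k)`: binary strings of length `n` starting with `k` ones,
ending with `k` zeros, whose middle factor `v_{k+1} … v_{n-k}` begins with 0,
ends with 1, and contains neither `k` consecutive 0's nor `k` consecutive 1's. -/
def Vnk (n k : ℕ) : Set (List Bool) :=
  {v | v.length = n ∧
    List.replicate k true <+: v ∧
    List.replicate k false <:+ v ∧
    ((v.drop k).take (n - 2 * k)).head? = some false ∧
    ((v.drop k).take (n - 2 * k)).getLast? = some true ∧
    ¬ List.replicate k false <:+: ((v.drop k).take (n - 2 * k)) ∧
    ¬ List.replicate k true <:+: ((v.drop k).take (n - 2 * k))}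

/-- `𝒱^(k) = ⋃_{i ≥ 2k+2} V_i^(k)`. -/
def VkSet (k : ℕ) : Set (List Bool) := ⋃ i ∈ {i : ℕ | 2 * k + 2 ≤ i}, Vnk i k

/-- `𝒱^(k)(n)`: elements of `𝒱^(k)` of length at most `n`. -/
def VkLe (k n : ℕ) : Set (List Bool) := {v ∈ VkSet k | v.length ≤ n}

/-- The set of binary strings of length `ℓ` that begin with 0, end with 1, and
contain neither `k` consecutive 0's nor `k` consecutive 1's. -/
def Rset (k ℓ : ℕ) : Set (List Bool) :=
  {w | w.length = ℓ ∧ w.head? = some false ∧ w.getLast? = some true ∧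
    ¬ List.replicate k false <:+: w ∧ ¬ List.replicate k true <:+: w}

/-- `r_ℓ^(k)`, with the convention `r_0^(k) = 1`. -/
noncomputable def r (k ℓ : ℕ) : ℕ := if ℓ = 0 then 1 else (Rset k ℓ).ncard

/-- Shifted `k`-generalized Fibonacci numbers: `f_ℓ^(k) = 2^ℓ` for `ℓ ≤ k-1`, and
`f_ℓ^(k) = ∑_{i=1}^{k} f_{ℓ-i}^(k)` for `ℓ ≥ k`. -/
def f (k : ℕ) : ℕ → ℕ
  | ℓ =>
    if h : ℓ < k then 2 ^ ℓ
    else ∑ i ∈ (Finset.range k).attach, f k (ℓ - (i.1 + 1))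
termination_by ℓ => ℓ
decreasing_by
  have hi := i.2
  simp only [Finset.mem_range] at hi
  omega

/-- `S^(k)(n) = ∑_{ℓ=0}^{n} f_ℓ^(k)`. -/
def S (k n : ℕ) : ℕ := ∑ ℓ ∈ Finset.range (n + 1), f k ℓ

/-- `d_ℓ^(k)`: 1 if `ℓ ≡ 0 (mod k)`, -1 if `ℓ ≡ 1 (mod k)`, 0 otherwise. -/
def d (k ℓ : ℕ) : ℤ := if ℓ % k = 0 then 1 else if ℓ % k = 1 then -1 else 0

/-- A set of binary strings is a cross-fix-free code if every element is
bifix-free and, for any two distinct elements `v, v'`, no nonempty prefix of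
`v` (including `v` itself) is a suffix of `v'`, and vice versa. -/
def CrossFixFree (X : Set (List Bool)) : Prop :=
  (∀ v ∈ X, BifixFree v) ∧
  ∀ v ∈ X, ∀ v' ∈ X, v ≠ v' → ∀ p : List Bool, p ≠ [] → p <+: v → ¬ p <:+ v'

/-- A strong cross-fix-free code: cross-fix-free and no codeword is a factor of
another. -/
def StrongCrossFixFree (X : Set (List Bool)) : Prop :=
  CrossFixFree X ∧ ∀ v ∈ X, ∀ v' ∈ X, v ≠ v' → ¬ v <:+: v'

/-- A Dyck word: equal numbers of 1's and 0's, and every prefix has at least as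
many 1's as 0's. -/
def IsDyck (w : List Bool) : Prop :=
  w.count true = w.count false ∧ ∀ p : List Bool, p <+: w → p.count false ≤ p.count true

/-- `𝒟 = { 1α0 : α a Dyck word }`. -/
def Dset : Set (List Bool) := {v | ∃ α : List Bool, IsDyck α ∧ v = true :: (α ++ [false])}

/-- `𝒟(n)`: elements of `𝒟` of length at most `n`. -/
def DLe (n : ℕ) : Set (List Bool) := {v ∈ Dset | v.length ≤ n}

/-!
A word of `𝒱^(k)` of length `n` is `1^k w 0^k` with `w` in `Rset k (n - 2k)`. A nonempty word
of `Rset` splits uniquely as `0^a 1^b u` with `1 ≤ a, b < k` and `u` shorter and either empty or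
again in `Rset`; hence `R = ∑ r_ℓ x^ℓ` satisfies `(1 - g²) R = 1` with `g = x + ⋯ + x^(k-1)`.
Counting words of length at most `n` divides the generating function by `1 - x`, and the claim
follows from `(1 - x)(1 + g) = 1 - x^k` and `(1 - x)(1 - g) = 1 - 2x + x^k`.
-/

namespace List

variable {α : Type*}

theorem exists_eq_replicate_append_of_head? {c : α} :
    ∀ {w : List α}, w.head? = some c →
      ∃ a u, 0 < a ∧ w = replicate a c ++ u ∧ u.head? ≠ some c
  | x :: t, h => by
    obtain rfl : x = c := by simpa using h
    by_cases ht : t.head? = some x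
    · obtain ⟨a, u, -, rfl, hu⟩ := exists_eq_replicate_append_of_head? ht
      exact ⟨a + 1, u, a.succ_pos, rfl, hu⟩
    · exact ⟨1, t, one_pos, rfl, ht⟩

theorem replicate_append_inj {c : α} {u u' : List α} (hu : u.head? ≠ some c)
    (hu' : u'.head? ≠ some c) :
    ∀ {a a' : ℕ}, replicate a c ++ u = replicate a' c ++ u' → a = a' ∧ u = u'
  | 0, 0, h => ⟨rfl, h⟩
  | 0, a' + 1, h => by
    simp only [replicate_zero, nil_append] at h
    simp [h, replicate_succ] at hu
  | a + 1, 0, h => by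
    simp only [replicate_zero, nil_append] at h
    simp [← h, replicate_succ] at hu'
  | a + 1, a' + 1, h => by
    obtain ⟨rfl, rfl⟩ := replicate_append_inj hu hu' (a := a) (a' := a')
      (by simpa [replicate_succ] using h)
    exact ⟨rfl, rfl⟩

theorem replicate_infix_append {c : α} {k : ℕ} {xs ys : List α}
    (hc : xs.getLast? ≠ some c ∨ ys.head? ≠ some c)
    (h : replicate k c <:+: xs ++ ys) : replicate k c <:+: xs ∨ replicate k c <:+: ys := by
  rcases infix_append_iff_ne_nil.1 h with h | h | ⟨l₁, l₂, h₁, h₂, hrep, hs, hp⟩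
  · exact .inl h
  · exact .inr h
  · exfalso
    have hl₁ : ∀ x ∈ l₁, x = c := fun x hx => eq_of_mem_replicate (hrep ▸ mem_append_left _ hx)
    have hl₂ : ∀ x ∈ l₂, x = c := fun x hx => eq_of_mem_replicate (hrep ▸ mem_append_right _ hx)
    obtain ⟨s, rfl⟩ := hs
    obtain ⟨t, rfl⟩ := hp
    rcases hc with hc | hc
    · apply hc
      rw [getLast?_append_of_ne_nil _ h₁, getLast?_eq_some_getLast h₁, hl₁ _ (getLast_mem h₁)]
    · apply hc
      rw [head?_append_of_ne_nil _ h₂, head?_eq_some_head h₂, hl₂ _ (head_mem h₂)]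

theorem replicate_infix_replicate_iff {c d : α} {k n : ℕ} :
    replicate k c <:+: replicate n d ↔ k ≤ n ∧ (k = 0 ∨ c = d) := by
  simp [infix_replicate_iff]

end List

open List

/-- `Rset k ℓ` together with the empty word: for a nonempty word the conditions on `head?` and
`getLast?` say that it starts with 0 and ends with 1. -/
def Rset₀ (k ℓ : ℕ) : Set (List Bool) :=
  {w | w.length = ℓ ∧ w.head? ≠ some true ∧ w.getLast? ≠ some false ∧
    ¬ replicate k false <:+: w ∧ ¬ replicate k true <:+: w}

lemma Option.ne_some_iff_eq_some_not {o : Option Bool} (ho : o ≠ none) {b : Bool} :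
    o ≠ some b ↔ o = some !b := by
  rcases o with _ | _ | _ <;> cases b <;> simp_all

lemma Rset₀_eq_Rset {k ℓ : ℕ} (hℓ : ℓ ≠ 0) : Rset₀ k ℓ = Rset k ℓ := by
  ext w
  simp only [Rset₀, Rset, Set.mem_ofPred_eq]
  refine and_congr_right fun hw => ?_
  have hne : w ≠ [] := by rintro rfl; exact hℓ hw.symm
  rw [Option.ne_some_iff_eq_some_not (by simpa using hne),
    Option.ne_some_iff_eq_some_not (by simpa using hne)]
  rfl

lemma Rset₀_zero {k : ℕ} (hk : 0 < k) : Rset₀ k 0 = {[]} := by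
  ext w
  simp only [Rset₀, Set.mem_ofPred_eq, Set.mem_singleton_iff, length_eq_zero_iff]
  refine ⟨And.left, ?_⟩
  rintro rfl
  simp [hk.ne']

lemma ncard_Rset₀ {k : ℕ} (hk : 0 < k) (ℓ : ℕ) : (Rset₀ k ℓ).ncard = r k ℓ := by
  rcases eq_or_ne ℓ 0 with rfl | hℓ
  · simp [Rset₀_zero hk, r]
  · rw [Rset₀_eq_Rset hℓ, r, if_neg hℓ]

def blockPairs (k ℓ : ℕ) : Finset (ℕ × ℕ) :=
  (Finset.Ico 1 k ×ˢ Finset.Ico 1 k).filter fun p => p.1 + p.2 ≤ ℓ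

lemma mem_blockPairs {k ℓ : ℕ} {p : ℕ × ℕ} :
    p ∈ blockPairs k ℓ ↔ (1 ≤ p.1 ∧ p.1 < k) ∧ (1 ≤ p.2 ∧ p.2 < k) ∧ p.1 + p.2 ≤ ℓ := by
  simp [blockPairs, and_assoc]

lemma blocks_append_mem_Rset₀ {k a b m : ℕ} {u : List Bool} (ha : 1 ≤ a) (hak : a < k)
    (hb : 1 ≤ b) (hbk : b < k) (hu : u ∈ Rset₀ k m) :
    replicate a false ++ replicate b true ++ u ∈ Rset₀ k (a + b + m) := by
  obtain ⟨hlen, hhead, hlast, hf, ht⟩ := hu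
  have hk : k ≠ 0 := by omega
  rw [append_assoc]
  refine ⟨by simp [hlen, add_assoc], ?_, ?_, fun h => ?_, fun h => ?_⟩
  · simp [head?_replicate, show a ≠ 0 by omega]
  · rcases eq_or_ne u [] with rfl | hu
    · simp [getLast?_replicate, show b ≠ 0 by omega]
    · rwa [getLast?_append_of_ne_nil _ (by simp [hu]), getLast?_append_of_ne_nil _ hu]
  · have hbu : (replicate b true ++ u).head? ≠ some false := by
      simp [head?_replicate, show b ≠ 0 by omega]
    rcases replicate_infix_append (.inr hbu) h with h | h
    · rw [replicate_infix_replicate_iff] at h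
      omega
    rcases replicate_infix_append (.inl (by simp [getLast?_replicate])) h with h | h
    · simp [replicate_infix_replicate_iff, hk] at h
    · exact hf h
  · rcases replicate_infix_append (.inl (by simp [getLast?_replicate])) h with h | h
    · simp [replicate_infix_replicate_iff, hk] at h
    rcases replicate_infix_append (.inr hhead) h with h | h
    · rw [replicate_infix_replicate_iff] at h
      omega
    · exact ht h

lemma exists_blocks_append_of_mem_Rset₀ {k ℓ : ℕ} {w : List Bool} (hℓ : ℓ ≠ 0)
    (hw : w ∈ Rset₀ k ℓ) : ∃ p ∈ blockPairs k ℓ, ∃ u ∈ Rset₀ k (ℓ - p.1 - p.2),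
      w = replicate p.1 false ++ replicate p.2 true ++ u := by
  obtain ⟨hlen, hhead, hlast, hf, ht⟩ := hw
  have hne : w ≠ [] := by rintro rfl; exact hℓ hlen.symm
  obtain ⟨a, w₁, ha, rfl, hw₁⟩ := exists_eq_replicate_append_of_head?
    ((Option.ne_some_iff_eq_some_not (by simpa using hne)).1 hhead)
  have hw₁ne : w₁ ≠ [] := by
    rintro rfl
    simp [getLast?_replicate, ha.ne'] at hlast
  obtain ⟨b, u, hb, rfl, hu⟩ := exists_eq_replicate_append_of_head?
    ((Option.ne_some_iff_eq_some_not (by simpa using hw₁ne)).1 hw₁)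
  have hak : a < k := by
    by_contra! h
    exact hf ((replicate_infix_replicate_iff.2 ⟨h, .inr rfl⟩).trans infix_append_left)
  have hbk : b < k := by
    by_contra! h
    exact ht ((replicate_infix_replicate_iff.2 ⟨h, .inr rfl⟩).trans
      (infix_append_left.trans infix_append_right))
  have hsuf : u <:+: replicate a false ++ (replicate b true ++ u) :=
    infix_append_right.trans infix_append_right
  simp only [length_append, length_replicate] at hlen
  refine ⟨(a, b), mem_blockPairs.2 ⟨⟨ha, hak⟩, ⟨hb, hbk⟩, by omega⟩, u,
    ⟨by omega, hu, ?_, fun h => hf (h.trans hsuf), fun h => ht (h.trans hsuf)⟩,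
    (append_assoc _ _ _).symm⟩
  rcases eq_or_ne u [] with rfl | hu
  · simp
  · rwa [getLast?_append_of_ne_nil _ (by simp [hu]), getLast?_append_of_ne_nil _ hu] at hlast

lemma blocks_append_inj {a b a' b' : ℕ} {u u' : List Bool} (hb : b ≠ 0) (hb' : b' ≠ 0)
    (hu : u.head? ≠ some true) (hu' : u'.head? ≠ some true)
    (h : replicate a false ++ replicate b true ++ u = replicate a' false ++ replicate b' true ++ u') :
    a = a' ∧ b = b' ∧ u = u' := by
  rw [append_assoc, append_assoc] at h
  obtain ⟨rfl, h'⟩ := replicate_append_inj (by simp [head?_replicate, hb])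
    (by simp [head?_replicate, hb']) h
  obtain ⟨rfl, rfl⟩ := replicate_append_inj hu hu' h'
  exact ⟨rfl, rfl, rfl⟩

lemma Rset₀_finite (k ℓ : ℕ) : (Rset₀ k ℓ).Finite :=
  (List.finite_length_eq Bool ℓ).subset fun _ hw => hw.1

lemma Rset₀_eq_biUnion {k ℓ : ℕ} (hℓ : ℓ ≠ 0) :
    Rset₀ k ℓ = ⋃ p ∈ blockPairs k ℓ,
      (replicate p.1 false ++ replicate p.2 true ++ ·) '' Rset₀ k (ℓ - p.1 - p.2) := by
  ext w
  simp only [Set.mem_iUnion, Set.mem_image, exists_prop]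
  constructor
  · intro hw
    obtain ⟨p, hp, u, hu, rfl⟩ := exists_blocks_append_of_mem_Rset₀ hℓ hw
    exact ⟨p, hp, u, hu, rfl⟩
  · rintro ⟨p, hp, u, hu, rfl⟩
    obtain ⟨⟨ha, hak⟩, ⟨hb, hbk⟩, hle⟩ := mem_blockPairs.1 hp
    convert blocks_append_mem_Rset₀ ha hak hb hbk hu using 2
    omega

lemma r_eq_sum_blockPairs {k ℓ : ℕ} (hk : 0 < k) (hℓ : ℓ ≠ 0) :
    r k ℓ = ∑ p ∈ blockPairs k ℓ, r k (ℓ - p.1 - p.2) := by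
  have hdisj : (blockPairs k ℓ : Set (ℕ × ℕ)).PairwiseDisjoint fun p =>
      (replicate p.1 false ++ replicate p.2 true ++ ·) '' Rset₀ k (ℓ - p.1 - p.2) := by
    rintro p hp q hq hpq
    refine Set.disjoint_left.2 ?_
    rintro _ ⟨u, hu, rfl⟩ ⟨u', hu', h⟩
    obtain ⟨h₁, h₂, -⟩ := blocks_append_inj (by have := mem_blockPairs.1 hq; omega)
      (by have := mem_blockPairs.1 hp; omega) hu'.2.1 hu.2.1 h
    exact hpq (Prod.ext h₁.symm h₂.symm)
  have hcard := (Finset.finite_toSet _).ncard_biUnion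
    (fun p _ => (Rset₀_finite _ _).image _) hdisj
  rw [finsum_mem_coe_finset] at hcard
  simp only [Finset.mem_coe] at hcard
  rw [← ncard_Rset₀ hk, Rset₀_eq_biUnion hℓ, hcard]
  refine Finset.sum_congr rfl fun p _ => ?_
  rw [Set.ncard_image_of_injective _ (append_right_injective _), ncard_Rset₀ hk]

lemma Vnk_eq_image {n k : ℕ} (hn : 2 * k ≤ n) :
    Vnk n k = (fun w => replicate k true ++ w ++ replicate k false) '' Rset k (n - 2 * k) := by
  ext v
  constructor
  · rintro ⟨hlen, hpre, hsuf, hmid⟩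
    refine ⟨(v.drop k).take (n - 2 * k), ⟨by simp [hlen]; omega, hmid⟩, ?_⟩
    rw [prefix_iff_eq_take.1 hpre, suffix_iff_eq_drop.1 hsuf]
    conv_rhs => rw [← take_append_drop k v, ← take_append_drop (n - 2 * k) (v.drop k), drop_drop]
    rw [show k + (n - 2 * k) = n - k by omega]
    simp [hlen]
  · rintro ⟨w, ⟨hwlen, hmid⟩, rfl⟩
    have hw : ((replicate k true ++ w ++ replicate k false).drop k).take (n - 2 * k) = w := by
      simp [hwlen]
    refine ⟨by simp [hwlen]; omega, by simp [append_assoc], suffix_append _ _, ?_⟩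
    rw [hw]
    exact hmid

lemma ncard_Vnk {n k : ℕ} (hn : 2 * k ≤ n) : (Vnk n k).ncard = (Rset k (n - 2 * k)).ncard := by
  rw [Vnk_eq_image hn, Set.ncard_image_of_injective _ fun x y h => by simpa using h]

lemma Rset_one (k : ℕ) : Rset k 1 = ∅ := by
  ext w
  simp only [Rset, Set.mem_ofPred_eq, Set.mem_empty_iff_false, iff_false, length_eq_one_iff]
  rintro ⟨⟨x, rfl⟩, h₁, h₂, -⟩
  simp_all

lemma mem_VkSet_iff {k : ℕ} {v : List Bool} :
    v ∈ VkSet k ↔ 2 * k + 2 ≤ v.length ∧ v ∈ Vnk v.length k := by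
  simp only [VkSet, Set.mem_iUnion, Set.mem_ofPred_eq, exists_prop]
  exact ⟨fun ⟨i, hi, hv⟩ => hv.1 ▸ ⟨hi, hv⟩, fun h => ⟨_, h⟩⟩

lemma ncard_setOf_mem_VkSet_length_eq (k m : ℕ) :
    {v ∈ VkSet k | v.length = m}.ncard = if 2 * k + 2 ≤ m then r k (m - 2 * k) else 0 := by
  split_ifs with hm
  · have hlayer : {v ∈ VkSet k | v.length = m} = Vnk m k := by
      ext v
      simp only [Set.mem_ofPred_eq, mem_VkSet_iff]
      exact ⟨fun ⟨⟨_, hv⟩, hl⟩ => hl ▸ hv, fun hv => ⟨⟨hv.1 ▸ hm, hv.1 ▸ hv⟩, hv.1⟩⟩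
    rw [hlayer, ncard_Vnk (by omega), r, if_neg (by omega)]
  · convert Set.ncard_empty (List Bool)
    ext v
    simp only [Set.mem_ofPred_eq, mem_VkSet_iff, Set.mem_empty_iff_false, iff_false]
    omega

lemma ncard_VkLe_succ (k n : ℕ) :
    (VkLe k (n + 1)).ncard = (VkLe k n).ncard + {v ∈ VkSet k | v.length = n + 1}.ncard := by
  have hsplit : VkLe k (n + 1) = VkLe k n ∪ {v ∈ VkSet k | v.length = n + 1} := by
    ext v
    simp only [VkLe, Set.mem_union, Set.mem_ofPred_eq, ← and_or_left]
    exact and_congr_right fun _ => by omega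
  have hdisj : Disjoint (VkLe k n) {v ∈ VkSet k | v.length = n + 1} :=
    Set.disjoint_left.2 fun v hv hv' => by have := hv.2; have := hv'.2; omega
  rw [hsplit, Set.ncard_union_eq hdisj ((List.finite_length_le Bool n).subset fun _ hv => hv.2)
    ((List.finite_length_eq Bool (n + 1)).subset fun _ hv => hv.2)]

open PowerSeries

noncomputable def rSeries (k : ℕ) : PowerSeries ℚ := mk fun n => (r k n : ℚ)

noncomputable def runSeries (k : ℕ) : PowerSeries ℚ := ∑ i ∈ Finset.Ico 1 k, X ^ i

lemma one_sub_X_mul_runSeries {k : ℕ} (hk : 1 ≤ k) : (1 - X) * runSeries k = X - X ^ k := by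
  rw [runSeries, mul_comm, geom_sum_Ico_mul_neg _ hk, pow_one]

lemma coeff_runSeries_sq_mul_rSeries (k n : ℕ) :
    coeff n (runSeries k ^ 2 * rSeries k) = ∑ p ∈ blockPairs k n, (r k (n - p.1 - p.2) : ℚ) := by
  rw [runSeries, sq, Finset.sum_mul_sum, ← Finset.sum_product', Finset.sum_mul, map_sum,
    blockPairs, Finset.sum_filter]
  refine Finset.sum_congr rfl fun p _ => ?_
  rw [← pow_add, coeff_X_pow_mul', rSeries, coeff_mk, Nat.sub_sub]

lemma one_sub_runSeries_sq_mul_rSeries {k : ℕ} (hk : 0 < k) :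
    (1 - runSeries k ^ 2) * rSeries k = 1 := by
  ext n
  rw [sub_mul, one_mul, map_sub, coeff_runSeries_sq_mul_rSeries, coeff_one, rSeries, coeff_mk]
  rcases eq_or_ne n 0 with rfl | hn
  · have : blockPairs k 0 = ∅ := by
      ext p
      simp only [mem_blockPairs, Finset.notMem_empty, iff_false]
      omega
    simp [this, r]
  · rw [r_eq_sum_blockPairs hk hn, if_neg hn]
    push_cast
    ring

lemma coeff_X_pow_mul_rSeries_sub_one (k m : ℕ) :
    coeff m (X ^ (2 * k) * (rSeries k - 1)) = ({v ∈ VkSet k | v.length = m}.ncard : ℚ) := by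
  rw [ncard_setOf_mem_VkSet_length_eq, coeff_X_pow_mul', map_sub, coeff_one, rSeries, coeff_mk]
  obtain hm | rfl | rfl | hm : m < 2 * k ∨ m = 2 * k ∨ m = 2 * k + 1 ∨ 2 * k + 2 ≤ m := by omega
  · simp [hm, show ¬ 2 * k + 2 ≤ m by omega]
  · simp [r]
  · simp [r, Rset_one]
  · simp [hm, show 2 * k ≤ m by omega, show m - 2 * k ≠ 0 by omega]

lemma one_sub_X_mul_VkLe_series (k : ℕ) :
    (1 - X) * mk (fun n => ((VkLe k n).ncard : ℚ)) = X ^ (2 * k) * (rSeries k - 1) := by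
  ext n
  rw [coeff_X_pow_mul_rSeries_sub_one, sub_mul, one_mul, map_sub, coeff_mk]
  cases n with
  | zero => simp [VkLe]
  | succ n =>
    rw [coeff_succ_X_mul, coeff_mk, ncard_VkLe_succ]
    push_cast
    ring

/-- For any `k ≥ 3`, as formal power series over `ℚ`:
`(1-x)(1-x^k)(1-2x+x^k) · ∑_n |𝒱^(k)(n)| x^n = x^{2k}(x-x^k)^2`. -/
theorem stmt_11 (k : ℕ) (hk : 3 ≤ k) :
    (1 - PowerSeries.X) * (1 - PowerSeries.X ^ k) *
        (1 - 2 * PowerSeries.X + PowerSeries.X ^ k) *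
        PowerSeries.mk (fun n => ((VkLe k n).ncard : ℚ)) =
      PowerSeries.X ^ (2 * k) * (PowerSeries.X - PowerSeries.X ^ k) ^ 2 := by
  have hXk : (X : PowerSeries ℚ) ^ k = X - (1 - X) * runSeries k := by
    rw [one_sub_X_mul_runSeries (by omega)]
    ring
  have hV := one_sub_X_mul_VkLe_series k
  have hR := one_sub_runSeries_sq_mul_rSeries (show 0 < k by omega)
  rw [hXk]
  linear_combination (1 - X) ^ 2 * (1 - runSeries k ^ 2) * hV + (1 - X) ^ 2 * X ^ (2 * k) * hR
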